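/- In the setting of the renormalized coherent-state quantization (finite moments 𝓘(n) = ∫₀^∞ t^n/N(t) dt, μ_n = 𝓘(n)/x_n!, x̃_n! = (μ_n/μ_0) x_n!, and x̃_n := x̃_n!/x̃_{n−1}!), the Berezin–Klauder–Toeplitz quantization of the function f(z) = z is the lowering operator: its matrix elements satisfy, for all n, m ∈ ℕ, (1/(μ_0 π √(x̃_n! x̃_m!))) ∫_ℂ z · z^n (conj z)^m / N(|z|²) dA(z) = √(x̃_{n+1}) · δ_{m, n+1}. -/

import Mathlib

open MeasureTheory

/-- The generalized factorial `xₙ! = x 1 * x 2 * ⋯ * x n` (with `x₀! = 1`). -/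
noncomputable def gfact (x : ℕ → ℝ) (n : ℕ) : ℝ := ∏ k ∈ Finset.range n, x (k + 1)

/-- The associated exponential `N(t) = Σ tⁿ/xₙ!`. -/
noncomputable def gexp (x : ℕ → ℝ) (t : ℝ) : ℝ := ∑' n : ℕ, t ^ n / gfact x n

/-- The moment integrals `𝓘(n) = ∫₀^∞ tⁿ / N(t) dt`. -/
noncomputable def momI (x : ℕ → ℝ) (n : ℕ) : ℝ := ∫ t in Set.Ioi (0 : ℝ), t ^ n / gexp x t

/-- The ratios `μₙ = 𝓘(n)/xₙ!`. -/
noncomputable def mu (x : ℕ → ℝ) (n : ℕ) : ℝ := momI x n / gfact x n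

/-- The renormalized factorials `x̃ₙ! = (μₙ/μ₀) xₙ!`. -/
noncomputable def tfact (x : ℕ → ℝ) (n : ℕ) : ℝ := (mu x n / mu x 0) * gfact x n

/-!
Rotating `z ↦ e^{iθ} z` multiplies `z^{n+1} z̄^m g(|z|)` by `e^{i(n+1-m)θ}`, so rotation
invariance of Lebesgue measure kills the integral unless `m = n + 1`. On the diagonal the
integrand is `|z|^{2(n+1)} / N(|z|²)`, and polar coordinates followed by `t = r²` turn
`∫_ℂ h(|z|²) dA` into `π ∫₀^∞ h(t) dt`; this gives `π 𝓘(n+1) = π μ₀ x̃_{n+1}!`, and the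
normalisation leaves `√(x̃_{n+1}!/x̃_n!)`.
-/

open Real Set ComplexConjugate

lemma Complex.integral_comp_norm_sq {E : Type*} [NormedAddCommGroup E] [NormedSpace ℝ E]
    (f : ℝ → E) : ∫ z : ℂ, f (‖z‖ ^ 2) = π • ∫ t in Ioi 0, f t := by
  have hball : volume.real (Metric.ball (0 : ℂ) 1) = π := by
    simp [measureReal_def, Complex.volume_ball]
  rw [integral_fun_norm_addHaar volume (fun r ↦ f (r ^ 2)), Complex.finrank_real_complex, hball,
    ← integral_comp_rpow_Ioi f two_ne_zero, smul_comm, ← Nat.cast_smul_eq_nsmul ℝ,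
    ← integral_smul]
  congr 1
  refine setIntegral_congr_fun measurableSet_Ioi fun y _ ↦ ?_
  norm_num [smul_smul, Real.rpow_two]

lemma Complex.integral_comp_circle_mul {E : Type*} [NormedAddCommGroup E] [NormedSpace ℝ E]
    (f : ℂ → E) (a : Circle) : ∫ z, f (a * z) = ∫ z, f z :=
  (rotation a).measurePreserving.integral_comp (rotation a).toHomeomorph.measurableEmbedding f

lemma Complex.integral_pow_mul_conj_pow_mul_radial_of_ne (g : ℝ → ℂ) {p q : ℕ}
    (hpq : p ≠ q) :
    ∫ z : ℂ, z ^ p * conj z ^ q * g ‖z‖ = 0 := by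
  have hpq' : (p - q : ℂ) ≠ 0 := sub_ne_zero.mpr (Nat.cast_injective.ne hpq)
  set a := Circle.exp (π / (p - q))
  have ha : (a : ℂ) ^ p * conj (a : ℂ) ^ q = -1 := by
    rw [Circle.coe_exp, ← Complex.exp_conj, ← Complex.exp_nat_mul, ← Complex.exp_nat_mul,
      ← Complex.exp_add, ← Complex.exp_pi_mul_I]
    congr 1
    simp only [map_mul, Complex.conj_ofReal, Complex.conj_I]
    push_cast
    field_simp
    ring
  have hrot := Complex.integral_comp_circle_mul (fun z ↦ z ^ p * conj z ^ q * g ‖z‖) a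
  have hodd : ∀ z : ℂ,
      (a * z) ^ p * conj (a * z) ^ q * g ‖a * z‖ = -(z ^ p * conj z ^ q * g ‖z‖) := by
    intro z
    simp only [map_mul, mul_pow, norm_mul, Circle.norm_coe, one_mul]
    linear_combination (z ^ p * conj z ^ q * g ‖z‖) * ha
  simp only [hodd, integral_neg] at hrot
  exact CharZero.neg_eq_self_iff.mp hrot

lemma gfact_succ (x : ℕ → ℝ) (n : ℕ) : gfact x (n + 1) = gfact x n * x (n + 1) :=
  Finset.prod_range_succ _ _

lemma gfact_pos {x : ℕ → ℝ} (hpos : ∀ n, 1 ≤ n → 0 < x n) (n : ℕ) : 0 < gfact x n :=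
  Finset.prod_pos fun k _ ↦ hpos _ (Nat.le_add_left 1 k)

lemma summable_gexp {x : ℕ → ℝ} (hpos : ∀ n, 1 ≤ n → 0 < x n)
    (hlim : Filter.Tendsto x Filter.atTop Filter.atTop) (t : ℝ) :
    Summable fun n ↦ t ^ n / gfact x n := by
  refine summable_of_ratio_norm_eventually_le (r := 1 / 2) (by norm_num) ?_
  filter_upwards [(hlim.comp (Filter.tendsto_add_atTop_nat 1)).eventually_ge_atTop (2 * ‖t‖)]
    with n hn
  have hx : 0 < x (n + 1) := hpos _ (Nat.le_add_left 1 n)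
  have hratio : ‖t‖ / x (n + 1) ≤ 1 / 2 := by
    rw [div_le_iff₀ hx]; simp only [Function.comp_apply] at hn; linarith
  calc ‖t ^ (n + 1) / gfact x (n + 1)‖ = ‖t‖ / x (n + 1) * ‖t ^ n / gfact x n‖ := by
        rw [gfact_succ, pow_succ, norm_div, norm_div, norm_mul, norm_mul,
          Real.norm_of_nonneg hx.le]
        field_simp
    _ ≤ 1 / 2 * ‖t ^ n / gfact x n‖ := by gcongr

lemma one_le_gexp {x : ℕ → ℝ} (hpos : ∀ n, 1 ≤ n → 0 < x n)
    (hlim : Filter.Tendsto x Filter.atTop Filter.atTop) {t : ℝ} (ht : 0 ≤ t) :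
    1 ≤ gexp x t := by
  simpa [gexp, gfact] using (summable_gexp hpos hlim t).le_tsum 0 fun n _ ↦
    div_nonneg (pow_nonneg ht n) (gfact_pos hpos n).le

lemma momI_pos {x : ℕ → ℝ} (hpos : ∀ n, 1 ≤ n → 0 < x n)
    (hlim : Filter.Tendsto x Filter.atTop Filter.atTop)
    (hint : ∀ n : ℕ, IntegrableOn (fun t ↦ t ^ n / gexp x t) (Ioi 0)) (n : ℕ) :
    0 < momI x n := by
  have hpos_on : ∀ t ∈ Ioi (0 : ℝ), 0 < t ^ n / gexp x t := fun t (ht : 0 < t) ↦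
    div_pos (pow_pos ht n) (zero_lt_one.trans_le (one_le_gexp hpos hlim ht.le))
  have hnonneg : 0 ≤ᵐ[volume.restrict (Ioi 0)] fun t ↦ t ^ n / gexp x t :=
    (ae_restrict_iff' measurableSet_Ioi).mpr (ae_of_all _ fun t ht ↦ (hpos_on t ht).le)
  rw [momI, setIntegral_pos_iff_support_of_nonneg_ae hnonneg (hint n),
    inter_eq_right.mpr fun t ht ↦ Function.mem_support.mpr (hpos_on t ht).ne', Real.volume_Ioi]
  exact ENNReal.zero_lt_top

lemma mu_pos {x : ℕ → ℝ} (hpos : ∀ n, 1 ≤ n → 0 < x n)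
    (hlim : Filter.Tendsto x Filter.atTop Filter.atTop)
    (hint : ∀ n : ℕ, IntegrableOn (fun t ↦ t ^ n / gexp x t) (Ioi 0)) (n : ℕ) :
    0 < mu x n :=
  div_pos (momI_pos hpos hlim hint n) (gfact_pos hpos n)

lemma tfact_pos {x : ℕ → ℝ} (hpos : ∀ n, 1 ≤ n → 0 < x n)
    (hlim : Filter.Tendsto x Filter.atTop Filter.atTop)
    (hint : ∀ n : ℕ, IntegrableOn (fun t ↦ t ^ n / gexp x t) (Ioi 0)) (n : ℕ) :
    0 < tfact x n :=
  mul_pos (div_pos (mu_pos hpos hlim hint n) (mu_pos hpos hlim hint 0)) (gfact_pos hpos n)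

lemma mu_zero_mul_tfact {x : ℕ → ℝ} (h0 : mu x 0 ≠ 0) {n : ℕ} (hn : gfact x n ≠ 0) :
    mu x 0 * tfact x n = momI x n := by
  rw [tfact, ← mul_assoc, mul_div_cancel₀ _ h0, mu, div_mul_cancel₀ _ hn]

lemma integral_mul_pow_mul_conj_pow_div_gexp (x : ℕ → ℝ) (n m : ℕ) :
    ∫ z : ℂ, z * z ^ n * conj z ^ m / (gexp x (‖z‖ ^ 2) : ℂ) =
      if m = n + 1 then ((π * momI x (n + 1) : ℝ) : ℂ) else 0 := by
  split_ifs with hm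
  · subst hm
    have hdiag : ∀ z : ℂ, z * z ^ n * conj z ^ (n + 1) / (gexp x (‖z‖ ^ 2) : ℂ) =
        (((‖z‖ ^ 2) ^ (n + 1) / gexp x (‖z‖ ^ 2) : ℝ) : ℂ) := fun z ↦ by
      rw [← pow_succ', ← mul_pow, Complex.mul_conj, Complex.normSq_eq_norm_sq]
      push_cast
      rfl
    simp_rw [hdiag]
    rw [Complex.integral_comp_norm_sq (fun t ↦ ((t ^ (n + 1) / gexp x t : ℝ) : ℂ)),
      integral_complex_ofReal, momI]
    push_cast
    rfl
  · have hradial : ∀ z : ℂ, z * z ^ n * conj z ^ m / (gexp x (‖z‖ ^ 2) : ℂ) =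
        z ^ (n + 1) * conj z ^ m * ((gexp x (‖z‖ ^ 2) : ℂ))⁻¹ := fun z ↦ by
      rw [← pow_succ', div_eq_mul_inv]
    simp_rw [hradial]
    exact Complex.integral_pow_mul_conj_pow_mul_radial_of_ne
      (fun r ↦ ((gexp x (r ^ 2) : ℂ))⁻¹) (Ne.symm hm)

theorem stmt_5_general (x : ℕ → ℝ) (hpos : ∀ n, 1 ≤ n → 0 < x n)
    (hlim : Filter.Tendsto x Filter.atTop Filter.atTop)
    (hint : ∀ n : ℕ, IntegrableOn (fun t => t ^ n / gexp x t) (Set.Ioi 0)) :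
    ∀ n m : ℕ,
      (1 / ((mu x 0 * Real.pi * Real.sqrt (tfact x n * tfact x m) : ℝ) : ℂ)) *
          ∫ z : ℂ, z * z ^ n * (starRingEnd ℂ) z ^ m / (gexp x (‖z‖ ^ 2) : ℂ) =
        if m = n + 1 then (Real.sqrt (tfact x (n + 1) / tfact x n) : ℂ) else 0 := by
  intro n m
  rw [integral_mul_pow_mul_conj_pow_div_gexp]
  split_ifs with hm
  · subst hm
    have hmu := mu_pos hpos hlim hint 0
    have hTn := tfact_pos hpos hlim hint n
    have hTn1 := tfact_pos hpos hlim hint (n + 1)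
    rw [← mu_zero_mul_tfact hmu.ne' (gfact_pos hpos (n + 1)).ne']
    norm_cast
    rw [Real.sqrt_mul hTn.le, Real.sqrt_div hTn1.le]
    field_simp
    rw [Real.sq_sqrt hTn1.le]
  · rw [mul_zero]

/-- the Berezin–Klauder–Toeplitz quantization of `f(z) = z` is the
lowering operator: its matrix elements satisfy, for all `n m`,
`(1/(μ₀ π √(x̃ₙ! x̃ₘ!))) ∫_ℂ z · zⁿ (conj z)ᵐ / N(|z|²) dA(z) = √(x̃_{n+1}) δ_{m,n+1}`,
where `x̃_{n+1} = x̃_{n+1}!/x̃ₙ!`. -/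
theorem stmt_5 (x : ℕ → ℝ) (hx0 : x 0 = 0) (hpos : ∀ n, 1 ≤ n → 0 < x n)
    (hlim : Filter.Tendsto x Filter.atTop Filter.atTop)
    (hint : ∀ n : ℕ, IntegrableOn (fun t => t ^ n / gexp x t) (Set.Ioi 0)) :
    ∀ n m : ℕ,
      (1 / ((mu x 0 * Real.pi * Real.sqrt (tfact x n * tfact x m) : ℝ) : ℂ)) *
          ∫ z : ℂ, z * z ^ n * (starRingEnd ℂ) z ^ m / (gexp x (‖z‖ ^ 2) : ℂ) =
        if m = n + 1 then (Real.sqrt (tfact x (n + 1) / tfact x n) : ℂ) else 0 :=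
  stmt_5_general x hpos hlim hint
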